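/- arXiv:2206.03724 — 3 statements merged into one kernel-verified Lean document; each statement's English description precedes it below -/
import Mathlib

section
/- Let I = [α_I, α'_I) be a bounded half-open interval with cutoff radii ε_I, ε'_I > 0 satisfying ε_I + ε'_I ≤ |I|. Then for every n ∈ ℕ₀ and every x ∈ ℝ, the (continuous representative of the) brushlet w_{n,I} satisfies w_{n,I}(x) = √(|I|/2) · e^{i α_I x} · [ g_I(|I|(x + e_{n,I})) + g_I(|I|(x − e_{n,I})) ], where e_{n,I} := π(n + 1/2)/|I|. -/
/-!
Up to the factor `√(2/|I|)`, the Fourier transform of `w_{n,I}` is `ĝ_I` transported from `[0, 1)`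
to `I` by `ξ ↦ α_I + |I| ξ`, times `cos (π(n + 1/2) (ξ - α_I)/|I|)`. In time, the affine change of
frequency variable becomes a dilation by `|I|` and a modulation by `e^{i α_I x}`, and writing the
cosine as the average of two exponentials shifts `g_I` by `± π(n + 1/2)`.
-/

open MeasureTheory

/-- The bell function `b_I(ξ) = ρ((ξ − α)/ε) ρ((α' − ξ)/ε')`. -/
noncomputable def bellFn (ρ : ℝ → ℝ) (α α' ε ε' : ℝ) (ξ : ℝ) : ℝ :=
  ρ ((ξ - α) / ε) * ρ ((α' - ξ) / ε')

/-- Pointwise inverse Fourier transform, for the normalization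
`(𝓕 f)(ξ) = (2π)^{-1/2} ∫ f(x) e^{-ixξ} dx`. -/
noncomputable def invFourier (g : ℝ → ℂ) (x : ℝ) : ℂ :=
  ((Real.sqrt (2 * Real.pi))⁻¹ : ℂ) * ∫ ξ : ℝ, g ξ * Complex.exp (Complex.I * x * ξ)

/-- Frequency side of the brushlet `w_{n,I}`:
`(𝓕 w_{n,I})(ξ) = √(2/|I|) b_I(ξ) cos(π(n + 1/2)(ξ − α)/|I|)`. -/
noncomputable def brushletHat (ρ : ℝ → ℝ) (α α' ε ε' : ℝ) (n : ℕ) (ξ : ℝ) : ℝ :=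
  Real.sqrt (2 / (α' - α)) * bellFn ρ α α' ε ε' ξ *
    Real.cos (Real.pi * ((n : ℝ) + 1 / 2) * (ξ - α) / (α' - α))

/-- The brushlet `w_{n,I}` (continuous representative), obtained by inverse Fourier
transform of `brushletHat`. -/
noncomputable def brushlet (ρ : ℝ → ℝ) (α α' ε ε' : ℝ) (n : ℕ) (x : ℝ) : ℂ :=
  invFourier (fun ξ => (brushletHat ρ α α' ε ε' n ξ : ℂ)) x

/-- Frequency side of the central bell function:
`ĝ_I(ξ) = ρ(|I|ξ/ε) ρ(|I|(1 − ξ)/ε')`. -/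
noncomputable def centralBellHat (ρ : ℝ → ℝ) (α α' ε ε' : ℝ) (ξ : ℝ) : ℝ :=
  ρ ((α' - α) * ξ / ε) * ρ ((α' - α) * (1 - ξ) / ε')

/-- The central bell function `g_I = 𝓕⁻¹ ĝ_I` (continuous representative). -/
noncomputable def centralBell (ρ : ℝ → ℝ) (α α' ε ε' : ℝ) (x : ℝ) : ℂ :=
  invFourier (fun ξ => (centralBellHat ρ α α' ε ε' ξ : ℂ)) x

theorem invFourier_const_mul (c : ℂ) (h : ℝ → ℂ) (x : ℝ) :
    invFourier (fun ξ => c * h ξ) x = c * invFourier h x := by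
  simp only [invFourier, mul_assoc, integral_const_mul]
  ring

theorem invFourier_comp_affine (h : ℝ → ℂ) {L : ℝ} (hL : L ≠ 0) (α x : ℝ) :
    invFourier (fun ξ => h ((ξ - α) / L)) x =
      |L| * Complex.exp (Complex.I * α * x) * invFourier h (L * x) := by
  have hshift : (∫ ξ : ℝ, h ((ξ - α) / L) * Complex.exp (Complex.I * x * ξ)) =
      ∫ ξ : ℝ, h (ξ / L) * Complex.exp (Complex.I * x * ↑(ξ + α)) := by
    rw [← integral_add_right_eq_self _ α]
    simp only [add_sub_cancel_right]
  have hdil := Measure.integral_comp_div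
    (fun u : ℝ => h u * Complex.exp (Complex.I * x * ↑(L * u + α))) L
  simp only [mul_div_cancel₀ _ hL] at hdil
  have hexp : ∀ u : ℝ, h u * Complex.exp (Complex.I * x * ↑(L * u + α)) =
      Complex.exp (Complex.I * α * x) * (h u * Complex.exp (Complex.I * ↑(L * x) * u)) := by
    intro u
    rw [mul_left_comm, ← Complex.exp_add]
    push_cast
    ring_nf
  simp only [invFourier, hshift, hdil, hexp, integral_const_mul, Complex.real_smul]
  push_cast
  ring

theorem MeasureTheory.Integrable.mul_exp_I_mul {h : ℝ → ℂ} (hh : Integrable h) (t : ℝ) :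
    Integrable (fun u : ℝ => h u * Complex.exp (Complex.I * t * u)) := by
  refine hh.mul_bdd (c := 1) (by fun_prop) (Filter.Eventually.of_forall fun u => ?_)
  rw [show Complex.I * t * u = ↑(t * u) * Complex.I by push_cast; ring,
    Complex.norm_exp_ofReal_mul_I]

theorem invFourier_mul_cos {h : ℝ → ℂ} (hh : Integrable h) (c y : ℝ) :
    invFourier (fun u => h u * Real.cos (c * u)) y =
      (invFourier h (y + c) + invFourier h (y - c)) / 2 := by
  have hcos : ∀ u : ℝ, h u * Real.cos (c * u) * Complex.exp (Complex.I * y * u) =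
      (h u * Complex.exp (Complex.I * ↑(y + c) * u) +
        h u * Complex.exp (Complex.I * ↑(y - c) * u)) / 2 := by
    intro u
    have hplus : Complex.exp (Complex.I * ↑(y + c) * u) =
        Complex.exp (↑(c * u) * Complex.I) * Complex.exp (Complex.I * y * u) := by
      rw [← Complex.exp_add]; push_cast; ring_nf
    have hminus : Complex.exp (Complex.I * ↑(y - c) * u) =
        Complex.exp (-↑(c * u) * Complex.I) * Complex.exp (Complex.I * y * u) := by
      rw [← Complex.exp_add]; push_cast; ring_nf
    rw [Complex.ofReal_cos, Complex.cos, hplus, hminus]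
    ring
  simp only [invFourier, hcos]
  rw [integral_div, integral_add (hh.mul_exp_I_mul _) (hh.mul_exp_I_mul _)]
  ring

section Brushlet

variable {ρ : ℝ → ℝ} {α α' ε ε' : ℝ}

theorem brushletHat_eq (hI : α < α') (n : ℕ) (ξ : ℝ) :
    brushletHat ρ α α' ε ε' n ξ =
      Real.sqrt (2 / (α' - α)) * (centralBellHat ρ α α' ε ε' ((ξ - α) / (α' - α)) *
        Real.cos (Real.pi * ((n : ℝ) + 1 / 2) * ((ξ - α) / (α' - α)))) := by
  have hL : α' - α ≠ 0 := (sub_pos.mpr hI).ne'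
  simp only [brushletHat, bellFn, centralBellHat]
  rw [show (α' - α) * ((ξ - α) / (α' - α)) = ξ - α by field_simp,
    show (α' - α) * (1 - (ξ - α) / (α' - α)) = α' - ξ by field_simp; ring, mul_div_assoc]
  ring

theorem centralBellHat_hasCompactSupport (hρneg : ∀ ξ, ξ ≤ -1 → ρ ξ = 0) (hI : α < α')
    (hε : 0 < ε) (hε' : 0 < ε') : HasCompactSupport (centralBellHat ρ α α' ε ε') := by
  have hL : 0 < α' - α := sub_pos.mpr hI
  refine HasCompactSupport.intro (isCompact_Icc (a := -(ε / (α' - α))) (b := 1 + ε' / (α' - α)))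
    fun u hu => ?_
  rw [Set.mem_Icc, not_and_or, not_le, not_le] at hu
  rcases hu with hu | hu
  · have h : (α' - α) * u / ε ≤ -1 := by
      rw [div_le_iff₀ hε]
      rw [← neg_div, lt_div_iff₀ hL] at hu
      linarith
    rw [centralBellHat, hρneg _ h, zero_mul]
  · have h : (α' - α) * (1 - u) / ε' ≤ -1 := by
      rw [div_le_iff₀ hε']
      rw [← lt_sub_iff_add_lt', div_lt_iff₀ hL] at hu
      linarith
    rw [centralBellHat, hρneg _ h, mul_zero]

theorem integrable_centralBellHat (hρ : Continuous ρ) (hρneg : ∀ ξ, ξ ≤ -1 → ρ ξ = 0)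
    (hI : α < α') (hε : 0 < ε) (hε' : 0 < ε') :
    Integrable fun ξ => (centralBellHat ρ α α' ε ε' ξ : ℂ) := by
  refine Continuous.integrable_of_hasCompactSupport (by unfold centralBellHat; fun_prop) ?_
  exact (centralBellHat_hasCompactSupport hρneg hI hε hε').comp_left Complex.ofReal_zero

end Brushlet

theorem sqrt_two_div_mul_half {L : ℝ} (hL : 0 < L) :
    Real.sqrt (2 / L) * (L / 2) = Real.sqrt (L / 2) := by
  rw [← Real.sqrt_sq (by positivity : 0 ≤ L / 2), ← Real.sqrt_mul (by positivity),
    Real.sqrt_sq (by positivity)]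
  congr 1
  field_simp

theorem stmt10_general (ρ : ℝ → ℝ) (hρsmooth : ∀ m : ℕ, ContDiff ℝ m ρ)
    (hρneg : ∀ ξ, ξ ≤ -1 → ρ ξ = 0)
    (α α' : ℝ) (hI : α < α') (ε ε' : ℝ) (hε : 0 < ε) (hε' : 0 < ε')
    (n : ℕ) (x : ℝ) :
    brushlet ρ α α' ε ε' n x =
      (Real.sqrt ((α' - α) / 2) : ℂ) * Complex.exp (Complex.I * α * x) *
        (centralBell ρ α α' ε ε'
            ((α' - α) * (x + Real.pi * ((n : ℝ) + 1 / 2) / (α' - α))) +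
          centralBell ρ α α' ε ε'
            ((α' - α) * (x - Real.pi * ((n : ℝ) + 1 / 2) / (α' - α)))) := by
  have hL : 0 < α' - α := sub_pos.mpr hI
  set c := Real.pi * ((n : ℝ) + 1 / 2)
  have hg := integrable_centralBellHat (hρsmooth 0).continuous hρneg hI hε hε'
  set ψ : ℝ → ℂ := fun u => centralBellHat ρ α α' ε ε' u * Real.cos (c * u)
  have hfreq : (fun ξ => (brushletHat ρ α α' ε ε' n ξ : ℂ)) =
      fun ξ => (Real.sqrt (2 / (α' - α)) : ℂ) * ψ ((ξ - α) / (α' - α)) := by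
    ext ξ
    simp only [brushletHat_eq hI, Complex.ofReal_mul, ψ, c]
  rw [brushlet, hfreq, invFourier_const_mul, invFourier_comp_affine ψ hL.ne',
    invFourier_mul_cos hg, mul_add, mul_add, mul_div_cancel₀ _ hL.ne', mul_sub,
    mul_div_cancel₀ _ hL.ne', abs_of_pos hL, ← sqrt_two_div_mul_half hL]
  simp only [centralBell]
  push_cast
  ring

/-- Time-domain representation of the brushlet:
`w_{n,I}(x) = √(|I|/2) e^{iαx} [g_I(|I|(x + e_{n,I})) + g_I(|I|(x − e_{n,I}))]`
with `e_{n,I} = π(n + 1/2)/|I|`. -/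
theorem stmt10 (ρ : ℝ → ℝ) (hρsmooth : ∀ m : ℕ, ContDiff ℝ m ρ)
    (hρ0 : ∀ ξ, 0 ≤ ρ ξ) (hρ1 : ∀ ξ, ρ ξ ≤ 1)
    (hρneg : ∀ ξ, ξ ≤ -1 → ρ ξ = 0) (hρpos : ∀ ξ, 1 ≤ ξ → ρ ξ = 1)
    (hρsq : ∀ ξ, ρ ξ ^ 2 + ρ (-ξ) ^ 2 = 1)
    (α α' : ℝ) (hI : α < α') (ε ε' : ℝ) (hε : 0 < ε) (hε' : 0 < ε')
    (hsum : ε + ε' ≤ α' - α) (n : ℕ) (x : ℝ) :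
    brushlet ρ α α' ε ε' n x =
      (Real.sqrt ((α' - α) / 2) : ℂ) * Complex.exp (Complex.I * α * x) *
        (centralBell ρ α α' ε ε'
            ((α' - α) * (x + Real.pi * ((n : ℝ) + 1 / 2) / (α' - α))) +
          centralBell ρ α α' ε ε'
            ((α' - α) * (x - Real.pi * ((n : ℝ) + 1 / 2) / (α' - α)))) :=
  stmt10_general ρ hρsmooth hρneg α α' hI ε ε' hε hε' n x
end

section
/- Let c ∈ (0, 1/2] and r ≥ 1. There exists a constant C = C(r, c, ρ) < ∞ such that for every bounded half-open interval I = [α_I, α'_I) with cutoff radii satisfying ε_I ≥ c|I|, ε'_I ≥ c|I| and ε_I + ε'_I ≤ |I|, the central bell function obeys |g_I(x)| ≤ C (1 + |x|)^{-r} for all x ∈ ℝ; in particular the constant C is independent of I. -/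
/-!
With `a = |I|/ε_I` and `b = |I|/ε'_I`, both in `(0, 1/c]`, one has `ĝ_I(ξ) = ρ(aξ) ρ(b(1 − ξ))`.
Since `ε_I, ε'_I ≤ |I|`, `ĝ_I` vanishes outside `[-1, 2]`, and by the chain and Leibniz rules
`‖ĝ_I⁽ⁿ⁾‖_∞ ≤ 2ⁿ (1 + 1/c)²ⁿ max_{k ≤ n} ‖ρ⁽ᵏ⁾‖²_∞`, uniformly in `I`. Integrating by parts `n`
times bounds `|x|ⁿ |g_I(x)|` by `∫ |ĝ_I⁽ⁿ⁾| ≤ 3 ‖ĝ_I⁽ⁿ⁾‖_∞`; the cases `n = 0` and `n = ⌈r⌉`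
together give the decay `(1 + |x|)^{-r}`.
-/

open MeasureTheory

section IteratedDeriv

variable {E : Type*} [NormedAddCommGroup E] [NormedSpace ℝ E]

theorem tsupport_iteratedDeriv_subset (f : ℝ → E) (n : ℕ) :
    tsupport (iteratedDeriv n f) ⊆ tsupport f := by
  induction n with
  | zero => simp
  | succ n ih => rw [iteratedDeriv_succ]; exact tsupport_deriv_subset.trans ih

theorem HasCompactSupport.iteratedDeriv {f : ℝ → E} (hf : HasCompactSupport f) (n : ℕ) :
    HasCompactSupport (iteratedDeriv n f) :=
  hf.mono' (subset_closure.trans (tsupport_iteratedDeriv_subset f n))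

theorem norm_iteratedDeriv_comp_mul_add_le {f : ℝ → E} {n : ℕ} (hf : ContDiff ℝ n f) {M : ℝ}
    (hM : ∀ x, ‖iteratedDeriv n f x‖ ≤ M) (s t x : ℝ) :
    ‖iteratedDeriv n (fun y => f (s * y + t)) x‖ ≤ |s| ^ n * M := by
  have hshift : ContDiff ℝ n (fun z => f (z + t)) := hf.comp (contDiff_id.add contDiff_const)
  rw [iteratedDeriv_comp_const_smul hshift, iteratedDeriv_comp_add_const, norm_smul, norm_pow,
    Real.norm_eq_abs]
  exact mul_le_mul_of_nonneg_left (hM _) (by positivity)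

theorem norm_iteratedDeriv_ofReal_comp {f : ℝ → ℝ} {n : ℕ} (hf : ContDiff ℝ n f) (x : ℝ) :
    ‖iteratedDeriv n (fun y => (f y : ℂ)) x‖ = ‖iteratedDeriv n f x‖ := by
  rw [← norm_iteratedFDeriv_eq_norm_iteratedDeriv, ← norm_iteratedFDeriv_eq_norm_iteratedDeriv]
  exact Complex.ofRealLI.norm_iteratedFDeriv_comp_left hf.contDiffAt le_rfl

theorem norm_iteratedDeriv_mul_le {f g : ℝ → ℝ} {n : ℕ} (hf : ContDiff ℝ n f)
    (hg : ContDiff ℝ n g) {A B : ℝ} (hA : ∀ i ≤ n, ∀ x, ‖iteratedDeriv i f x‖ ≤ A)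
    (hB : ∀ i ≤ n, ∀ x, ‖iteratedDeriv i g x‖ ≤ B) (x : ℝ) :
    ‖iteratedDeriv n (fun y => f y * g y) x‖ ≤ 2 ^ n * (A * B) := by
  have hchoose : (2 : ℝ) ^ n = ∑ i ∈ Finset.range (n + 1), (n.choose i : ℝ) := by
    exact_mod_cast (Nat.sum_range_choose n).symm
  rw [iteratedDeriv_fun_mul hf.contDiffAt hg.contDiffAt, hchoose, Finset.sum_mul]
  refine (norm_sum_le _ _).trans (Finset.sum_le_sum fun i hi => ?_)
  have hi : i ≤ n := Nat.lt_succ_iff.mp (Finset.mem_range.mp hi)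
  rw [mul_assoc, norm_mul, Real.norm_natCast, norm_mul]
  gcongr
  · exact (norm_nonneg _).trans (hA 0 (Nat.zero_le n) x)
  · exact hA i hi x
  · exact hB (n - i) (Nat.sub_le n i) x

end IteratedDeriv

theorem integral_norm_le_of_forall_notMem_Icc {E : Type*} [NormedAddCommGroup E] {f : ℝ → E}
    {a b M : ℝ} (hab : a ≤ b) (hM : ∀ x, ‖f x‖ ≤ M) (hf : ∀ x ∉ Set.Icc a b, f x = 0) :
    ∫ x, ‖f x‖ ≤ M * (b - a) := by
  rw [← setIntegral_eq_integral_of_forall_compl_eq_zero fun x hx => by simp [hf x hx],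
    ← Real.volume_real_Icc_of_le hab]
  refine (le_abs_self _).trans ?_
  exact norm_setIntegral_le_of_norm_le_const (f := fun x => ‖f x‖) measure_Icc_lt_top
    fun x _ => by simpa using hM x

section Fourier

open FourierTransform Real

theorem invFourier_eq_fourier (g : ℝ → ℂ) (x : ℝ) :
    invFourier g x = ((√(2 * π))⁻¹ : ℂ) * 𝓕 g (-x / (2 * π)) := by
  rw [invFourier, fourier_real_eq_integral_exp_smul]
  congr 1
  refine integral_congr_ae (Filter.Eventually.of_forall fun ξ => ?_)
  have hphase : (-2 * π * ξ * (-x / (2 * π)) : ℝ) = ξ * x := by field_simp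
  simp only [smul_eq_mul, hphase]
  push_cast
  ring_nf

theorem norm_invFourier_mul_pow_le {g : ℝ → ℂ} {n : ℕ} (hg : ContDiff ℝ n g)
    (hint : ∀ k ≤ n, Integrable (iteratedDeriv k g)) (x : ℝ) :
    ‖invFourier g x‖ * |x| ^ n ≤ ∫ ξ, ‖iteratedDeriv n g ξ‖ := by
  set w := -x / (2 * π)
  have hw : 2 * π * |w| = |x| := by
    rw [abs_div, abs_neg, abs_of_pos (by positivity : (0 : ℝ) < 2 * π)]
    field_simp
  have hderiv : ‖𝓕 g w‖ * |x| ^ n ≤ ∫ ξ, ‖iteratedDeriv n g ξ‖ := by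
    have h : ‖𝓕 (iteratedDeriv n g) w‖ ≤ ∫ ξ, ‖iteratedDeriv n g ξ‖ :=
      VectorFourier.norm_fourierIntegral_le_integral_norm _ _ _ _ _
    rw [fourier_iteratedDeriv (N := n) hg (fun k hk => hint k (by exact_mod_cast hk))
      le_rfl] at h
    simpa [norm_smul, norm_pow, abs_of_pos pi_pos, ← hw, mul_comm, mul_pow, mul_assoc] using h
  have hpre : ‖((√(2 * π))⁻¹ : ℂ)‖ ≤ 1 := by
    rw [norm_inv, Complex.norm_real, norm_of_nonneg (sqrt_nonneg _)]
    exact inv_le_one_of_one_le₀ (one_le_sqrt.2 (by nlinarith [pi_gt_three]))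
  rw [invFourier_eq_fourier, norm_mul, mul_assoc]
  exact (mul_le_of_le_one_left (by positivity) hpre).trans hderiv

end Fourier

theorem le_mul_one_add_rpow_neg {y K t r : ℝ} {n : ℕ} (hy : 0 ≤ y) (ht : 0 ≤ t) (hr : r ≤ n)
    (h₀ : y ≤ K) (hn : y * t ^ n ≤ K) : y ≤ 2 ^ n * K * (1 + t) ^ (-r) := by
  have hweighted : y * (1 + t) ^ n ≤ 2 ^ n * K := by
    rcases le_total t 1 with h | h
    · calc y * (1 + t) ^ n ≤ y * 2 ^ n := by gcongr; linarith
        _ ≤ 2 ^ n * K := by rw [mul_comm]; gcongr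
    · calc y * (1 + t) ^ n ≤ y * (2 * t) ^ n := by gcongr; linarith
        _ = 2 ^ n * (y * t ^ n) := by ring
        _ ≤ 2 ^ n * K := by gcongr
  have hpos : 0 < (1 + t) ^ n := by positivity
  calc y = y * (1 + t) ^ n * (1 + t) ^ (-(n : ℝ)) := by
        rw [Real.rpow_neg (by positivity), Real.rpow_natCast, mul_assoc, mul_inv_cancel₀ hpos.ne',
          mul_one]
    _ ≤ 2 ^ n * K * (1 + t) ^ (-r) :=
        mul_le_mul hweighted (Real.rpow_le_rpow_of_exponent_le (by linarith) (by linarith))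
          (by positivity) (by have := hy.trans h₀; positivity)

section Ramp

variable {ρ : ℝ → ℝ}

theorem hasCompactSupport_deriv_of_eq_on_rays (hneg : ∀ ξ, ξ ≤ -1 → ρ ξ = 0)
    (hpos : ∀ ξ, 1 ≤ ξ → ρ ξ = 1) : HasCompactSupport (deriv ρ) := by
  refine HasCompactSupport.intro (isCompact_Icc (a := -1) (b := 1)) fun x hx => ?_
  rcases not_and_or.mp hx with hx | hx
  · have hloc : ρ =ᶠ[nhds x] fun _ => 0 :=
      Filter.eventually_of_mem (Iio_mem_nhds (not_le.mp hx)) fun y hy => hneg y (le_of_lt hy)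
    simp [hloc.deriv_eq]
  · have hloc : ρ =ᶠ[nhds x] fun _ => 1 :=
      Filter.eventually_of_mem (Ioi_mem_nhds (not_le.mp hx)) fun y hy => hpos y (le_of_lt hy)
    simp [hloc.deriv_eq]

theorem exists_bound_iteratedDeriv_of_eq_on_rays {n : ℕ} (hρ : ContDiff ℝ n ρ)
    (h0 : ∀ ξ, 0 ≤ ρ ξ) (h1 : ∀ ξ, ρ ξ ≤ 1)
    (hneg : ∀ ξ, ξ ≤ -1 → ρ ξ = 0) (hpos : ∀ ξ, 1 ≤ ξ → ρ ξ = 1) :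
    ∃ M, ∀ k ≤ n, ∀ x, ‖iteratedDeriv k ρ x‖ ≤ M := by
  have hbdd : ∀ k ≤ n, BddAbove (Set.range fun x => ‖iteratedDeriv k ρ x‖) := by
    rintro (_ | k) hk
    · refine ⟨1, Set.forall_mem_range.2 fun x => ?_⟩
      simpa [abs_le] using ⟨(neg_nonpos.2 zero_le_one).trans (h0 x), h1 x⟩
    · have hcs : HasCompactSupport (iteratedDeriv (k + 1) ρ) := by
        rw [iteratedDeriv_succ']
        exact (hasCompactSupport_deriv_of_eq_on_rays hneg hpos).iteratedDeriv k
      obtain ⟨C, hC⟩ := hcs.exists_bound_of_continuous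
        (hρ.continuous_iteratedDeriv (k + 1) (by exact_mod_cast hk))
      exact ⟨C, Set.forall_mem_range.2 hC⟩
  obtain ⟨M, hM⟩ := (Set.finite_Iic n).bddAbove_biUnion.2 hbdd
  exact ⟨M, fun k hk x => hM (Set.mem_biUnion hk ⟨x, rfl⟩)⟩

end Ramp

section CentralBell

variable {ρ : ℝ → ℝ} {α α' ε ε' : ℝ}

theorem contDiff_centralBellHat {n : ℕ} (hρ : ContDiff ℝ n ρ) :
    ContDiff ℝ n (centralBellHat ρ α α' ε ε') :=
  (hρ.comp (by fun_prop)).mul (hρ.comp (by fun_prop))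

theorem tsupport_centralBellHat_subset (hneg : ∀ ξ, ξ ≤ -1 → ρ ξ = 0) (hε : 0 < ε)
    (hε' : 0 < ε') (hεL : ε ≤ α' - α) (hε'L : ε' ≤ α' - α) :
    tsupport (centralBellHat ρ α α' ε ε') ⊆ Set.Icc (-1) 2 := by
  refine closure_minimal (fun ξ hξ => ?_) isClosed_Icc
  by_contra hξI
  refine hξ ?_
  rcases not_and_or.mp hξI with hlow | hhigh
  · have : (α' - α) * ξ / ε ≤ -1 := by
      rw [div_le_iff₀ hε]; nlinarith
    simp [centralBellHat, hneg _ this]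
  · have : (α' - α) * (1 - ξ) / ε' ≤ -1 := by
      rw [div_le_iff₀ hε']; nlinarith
    simp [centralBellHat, hneg _ this]

theorem exists_bound_iteratedDeriv_centralBellHat {n : ℕ} (hρ : ContDiff ℝ n ρ)
    (h0 : ∀ ξ, 0 ≤ ρ ξ) (h1 : ∀ ξ, ρ ξ ≤ 1)
    (hneg : ∀ ξ, ξ ≤ -1 → ρ ξ = 0) (hpos : ∀ ξ, 1 ≤ ξ → ρ ξ = 1) {c : ℝ} (hc : 0 < c) :
    ∃ D, ∀ α α' ε ε' : ℝ, 0 < α' - α → c * (α' - α) ≤ ε → c * (α' - α) ≤ ε' →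
      ∀ ξ, ‖iteratedDeriv n (centralBellHat ρ α α' ε ε') ξ‖ ≤ D := by
  obtain ⟨M, hM⟩ := exists_bound_iteratedDeriv_of_eq_on_rays hρ h0 h1 hneg hpos
  have hM0 : 0 ≤ M := (norm_nonneg _).trans (hM 0 (Nat.zero_le n) 0)
  set A := (1 + c⁻¹) ^ n * M
  have hfactor : ∀ s t, |s| ≤ c⁻¹ → ∀ i ≤ n, ∀ x,
      ‖iteratedDeriv i (fun y => ρ (s * y + t)) x‖ ≤ A := by
    intro s t hs i hi x
    refine (norm_iteratedDeriv_comp_mul_add_le (hρ.of_le (by exact_mod_cast hi))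
      (hM i hi) s t x).trans (mul_le_mul_of_nonneg_right ?_ hM0)
    calc |s| ^ i ≤ (1 + c⁻¹) ^ i := by gcongr; linarith
      _ ≤ (1 + c⁻¹) ^ n := pow_le_pow_right₀ (by simp [hc.le]) hi
  refine ⟨2 ^ n * (A * A), fun α α' ε ε' hL hε hε' ξ => ?_⟩
  have hscale : ∀ δ, c * (α' - α) ≤ δ → |(α' - α) / δ| ≤ c⁻¹ := fun δ hδ => by
    have hδ0 : 0 < δ := (mul_pos hc hL).trans_le hδ
    rw [abs_of_pos (div_pos hL hδ0), div_le_iff₀ hδ0, ← div_eq_inv_mul, le_div_iff₀ hc]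
    linarith
  have hsplit : centralBellHat ρ α α' ε ε' = fun y =>
      ρ ((α' - α) / ε * y + 0) * ρ (-((α' - α) / ε') * y + (α' - α) / ε') := by
    funext y; simp only [centralBellHat]; ring_nf
  rw [hsplit]
  exact norm_iteratedDeriv_mul_le (hρ.comp (by fun_prop)) (hρ.comp (by fun_prop))
    (hfactor _ _ (hscale ε hε)) (hfactor _ _ (by rw [abs_neg]; exact hscale ε' hε')) ξ

end CentralBell

theorem exists_bound_norm_centralBell_mul_pow {ρ : ℝ → ℝ} {n : ℕ} (hρ : ContDiff ℝ n ρ)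
    (h0 : ∀ ξ, 0 ≤ ρ ξ) (h1 : ∀ ξ, ρ ξ ≤ 1)
    (hneg : ∀ ξ, ξ ≤ -1 → ρ ξ = 0) (hpos : ∀ ξ, 1 ≤ ξ → ρ ξ = 1) {c : ℝ} (hc : 0 < c) :
    ∃ K, ∀ α α' ε ε' : ℝ, α < α' → c * (α' - α) ≤ ε → c * (α' - α) ≤ ε' →
      ε + ε' ≤ α' - α → ∀ x, ‖centralBell ρ α α' ε ε' x‖ * |x| ^ n ≤ K := by
  obtain ⟨D, hD⟩ := exists_bound_iteratedDeriv_centralBellHat hρ h0 h1 hneg hpos hc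
  refine ⟨D * (2 - -1), fun α α' ε ε' hα hε hε' hsum x => ?_⟩
  have hL : 0 < α' - α := sub_pos.2 hα
  have hε0 : 0 < ε := (mul_pos hc hL).trans_le hε
  have hε'0 : 0 < ε' := (mul_pos hc hL).trans_le hε'
  set G : ℝ → ℂ := fun ξ => (centralBellHat ρ α α' ε ε' ξ : ℂ)
  have hGsupp : tsupport G ⊆ Set.Icc (-1) 2 :=
    (tsupport_comp_subset Complex.ofReal_zero _).trans
      (tsupport_centralBellHat_subset hneg hε0 hε'0 (by linarith) (by linarith))
  have hGcpt : HasCompactSupport G := isCompact_Icc.of_isClosed_subset (isClosed_tsupport G) hGsupp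
  have hGsmooth : ContDiff ℝ n G := Complex.ofRealCLM.contDiff.comp (contDiff_centralBellHat hρ)
  have hGint : ∀ k ≤ n, Integrable (iteratedDeriv k G) := fun k hk =>
    (hGsmooth.continuous_iteratedDeriv k (by exact_mod_cast hk)).integrable_of_hasCompactSupport
      (hGcpt.iteratedDeriv k)
  calc ‖centralBell ρ α α' ε ε' x‖ * |x| ^ n ≤ ∫ ξ, ‖iteratedDeriv n G ξ‖ :=
        norm_invFourier_mul_pow_le hGsmooth hGint x
    _ ≤ D * (2 - -1) := by
        refine integral_norm_le_of_forall_notMem_Icc (by norm_num) (fun ξ => ?_) fun ξ hξ => ?_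
        · rw [norm_iteratedDeriv_ofReal_comp (contDiff_centralBellHat hρ)]
          exact hD α α' ε ε' hL hε hε' ξ
        · exact image_eq_zero_of_notMem_tsupport
            fun h => hξ (hGsupp (tsupport_iteratedDeriv_subset G n h))

theorem stmt11_general (ρ : ℝ → ℝ) (hρsmooth : ∀ m : ℕ, ContDiff ℝ m ρ)
    (hρ0 : ∀ ξ, 0 ≤ ρ ξ) (hρ1 : ∀ ξ, ρ ξ ≤ 1)
    (hρneg : ∀ ξ, ξ ≤ -1 → ρ ξ = 0) (hρpos : ∀ ξ, 1 ≤ ξ → ρ ξ = 1)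
    (c : ℝ) (hc0 : 0 < c) (r : ℝ) :
    ∃ C : ℝ, ∀ α α' ε ε' : ℝ, α < α' → c * (α' - α) ≤ ε → c * (α' - α) ≤ ε' →
      ε + ε' ≤ α' - α → ∀ x : ℝ,
        ‖centralBell ρ α α' ε ε' x‖ ≤ C * (1 + |x|) ^ (-r) := by
  obtain ⟨K₀, hK₀⟩ :=
    exists_bound_norm_centralBell_mul_pow (hρsmooth 0) hρ0 hρ1 hρneg hρpos hc0
  obtain ⟨K, hK⟩ :=
    exists_bound_norm_centralBell_mul_pow (hρsmooth ⌈r⌉₊) hρ0 hρ1 hρneg hρpos hc0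
  refine ⟨2 ^ ⌈r⌉₊ * max K₀ K, fun α α' ε ε' hα hε hε' hsum x => ?_⟩
  refine le_mul_one_add_rpow_neg (norm_nonneg _) (abs_nonneg x) (Nat.le_ceil r) ?_ ?_
  · simpa using (hK₀ α α' ε ε' hα hε hε' hsum x).trans (le_max_left _ _)
  · exact (hK α α' ε ε' hα hε hε' hsum x).trans (le_max_right _ _)

/-- Uniform polynomial decay of central bell functions: for
`c ∈ (0, 1/2]` and `r ≥ 1` there is `C = C(r, c, ρ)` such that for every bounded
half-open interval `I = [α, α')` with cutoff radii `ε ≥ c|I|`, `ε' ≥ c|I|`,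
`ε + ε' ≤ |I|`, one has `|g_I(x)| ≤ C (1 + |x|)^{-r}` for all `x ∈ ℝ`. -/
theorem stmt11 (ρ : ℝ → ℝ) (hρsmooth : ∀ m : ℕ, ContDiff ℝ m ρ)
    (hρ0 : ∀ ξ, 0 ≤ ρ ξ) (hρ1 : ∀ ξ, ρ ξ ≤ 1)
    (hρneg : ∀ ξ, ξ ≤ -1 → ρ ξ = 0) (hρpos : ∀ ξ, 1 ≤ ξ → ρ ξ = 1)
    (hρsq : ∀ ξ, ρ ξ ^ 2 + ρ (-ξ) ^ 2 = 1)
    (c : ℝ) (hc0 : 0 < c) (hc : c ≤ 1 / 2) (r : ℝ) (hr : 1 ≤ r) :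
    ∃ C : ℝ, ∀ α α' ε ε' : ℝ, α < α' → c * (α' - α) ≤ ε → c * (α' - α) ≤ ε' →
      ε + ε' ≤ α' - α → ∀ x : ℝ,
        ‖centralBell ρ α α' ε ε' x‖ ≤ C * (1 + |x|) ^ (-r) :=
  stmt11_general ρ hρsmooth hρ0 hρ1 hρneg hρpos c hc0 r
end

section
/- Let I = [α_I, α'_I) and J = [α_J, α'_J) be bounded half-open intervals with α'_I = α_J (adjacent) and compatible cutoff radii: ε'_I = ε_J, ε_I + ε'_I ≤ |I| and ε_J + ε'_J ≤ |J|. Then for every f ∈ L²(ℝ; ℂ) one has (𝓕 𝒫_I f)(ξ) + (𝓕 𝒫_J f)(ξ) = (𝓕 f)(ξ) for almost every ξ ∈ [α_I + ε_I, α'_J − ε'_J]. -/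
/-!
On `[α_I + ε_I, α'_J − ε'_J]` the reflections at the outer endpoints `α_I`, `α'_J` land where the
bells vanish, the bells satisfy `b_I² + b_J² = 1` because `ρ(t)² + ρ(−t)² = 1` across the common
endpoint `α'_I`, and the two reflection terms at `α'_I` cancel because
`b_I(ξ) b_I(2α'_I − ξ) = b_J(ξ) b_J(2α'_I − ξ)`.
-/

open MeasureTheory

section Bell

variable {ρ : ℝ → ℝ} {α α' ε ε' ξ : ℝ}

theorem bellFn_eq_right_factor (hρpos : ∀ ξ, 1 ≤ ξ → ρ ξ = 1) (hε : 0 < ε) (h : α + ε ≤ ξ) :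
    bellFn ρ α α' ε ε' ξ = ρ ((α' - ξ) / ε') := by
  rw [bellFn, hρpos _ ((le_div_iff₀ hε).2 (by linarith)), one_mul]

theorem bellFn_eq_left_factor (hρpos : ∀ ξ, 1 ≤ ξ → ρ ξ = 1) (hε' : 0 < ε') (h : ξ ≤ α' - ε') :
    bellFn ρ α α' ε ε' ξ = ρ ((ξ - α) / ε) := by
  rw [bellFn, hρpos _ ((le_div_iff₀ hε').2 (by linarith)), mul_one]

theorem bellFn_eq_zero_of_le_left_edge (hρneg : ∀ ξ, ξ ≤ -1 → ρ ξ = 0) (hε : 0 < ε)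
    (h : ξ ≤ α - ε) : bellFn ρ α α' ε ε' ξ = 0 := by
  rw [bellFn, hρneg _ ((div_le_iff₀ hε).2 (by linarith)), zero_mul]

theorem bellFn_eq_zero_of_right_edge_le (hρneg : ∀ ξ, ξ ≤ -1 → ρ ξ = 0) (hε' : 0 < ε')
    (h : α' + ε' ≤ ξ) : bellFn ρ α α' ε ε' ξ = 0 := by
  rw [bellFn, hρneg _ ((div_le_iff₀ hε').2 (by linarith)), mul_zero]

variable {β γ δ η : ℝ}

theorem bellFn_sq_add_bellFn_sq (hρpos : ∀ ξ, 1 ≤ ξ → ρ ξ = 1)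
    (hρsq : ∀ ξ, ρ ξ ^ 2 + ρ (-ξ) ^ 2 = 1) (hε : 0 < ε) (hη : 0 < η)
    (hα : α + ε ≤ ξ) (hγ : ξ ≤ γ - η) :
    bellFn ρ α β ε δ ξ ^ 2 + bellFn ρ β γ δ η ξ ^ 2 = 1 := by
  rw [bellFn_eq_right_factor hρpos hε hα, bellFn_eq_left_factor hρpos hη hγ, add_comm,
    ← hρsq ((ξ - β) / δ), ← neg_div, neg_sub]

/-- Away from `[β - δ, β + δ]` one factor on each side vanishes; inside it the outer ramps are `1`. -/
theorem bellFn_mul_bellFn_reflect_eq (hρneg : ∀ ξ, ξ ≤ -1 → ρ ξ = 0)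
    (hρpos : ∀ ξ, 1 ≤ ξ → ρ ξ = 1) (hε : 0 < ε) (hδ : 0 < δ) (hη : 0 < η)
    (hαβ : ε + δ ≤ β - α) (hβγ : δ + η ≤ γ - β) (ξ : ℝ) :
    bellFn ρ α β ε δ ξ * bellFn ρ α β ε δ (2 * β - ξ) =
      bellFn ρ β γ δ η ξ * bellFn ρ β γ δ η (2 * β - ξ) := by
  rcases le_or_gt ξ (β - δ) with hlow | hlow
  · rw [bellFn_eq_zero_of_right_edge_le hρneg hδ (by linarith : β + δ ≤ 2 * β - ξ),
      bellFn_eq_zero_of_le_left_edge hρneg hδ hlow, mul_zero, zero_mul]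
  rcases le_or_gt (β + δ) ξ with hhigh | hhigh
  · rw [bellFn_eq_zero_of_right_edge_le hρneg hδ hhigh,
      bellFn_eq_zero_of_le_left_edge hρneg hδ (by linarith : 2 * β - ξ ≤ β - δ), zero_mul, mul_zero]
  rw [bellFn_eq_right_factor hρpos hε (by linarith : α + ε ≤ ξ),
    bellFn_eq_right_factor hρpos hε (by linarith : α + ε ≤ 2 * β - ξ),
    bellFn_eq_left_factor hρpos hη (by linarith : ξ ≤ γ - η),
    bellFn_eq_left_factor hρpos hη (by linarith : 2 * β - ξ ≤ γ - η),
    show β - (2 * β - ξ) = ξ - β by ring, show 2 * β - ξ - β = β - ξ by ring, mul_comm]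

end Bell

theorem stmt14_general (ρ : ℝ → ℝ)
    (hρneg : ∀ ξ, ξ ≤ -1 → ρ ξ = 0) (hρpos : ∀ ξ, 1 ≤ ξ → ρ ξ = 1)
    (hρsq : ∀ ξ, ρ ξ ^ 2 + ρ (-ξ) ^ 2 = 1)
    (αI αI' αJ' : ℝ)
    (εI εI' εJ' : ℝ) (hεI : 0 < εI) (hεI' : 0 < εI') (hεJ' : 0 < εJ')
    (hsumI : εI + εI' ≤ αI' - αI) (hsumJ : εI' + εJ' ≤ αJ' - αI')
    (F : Lp ℂ 2 (volume : Measure ℝ) ≃ₗᵢ[ℂ] Lp ℂ 2 (volume : Measure ℝ))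
    (PI PJ : Lp ℂ 2 (volume : Measure ℝ) →L[ℂ] Lp ℂ 2 (volume : Measure ℝ))
    (hPI : ∀ f : Lp ℂ 2 (volume : Measure ℝ),
      (F (PI f) : ℝ → ℂ) =ᵐ[volume] fun ξ =>
        (bellFn ρ αI αI' εI εI' ξ : ℂ) *
          ((bellFn ρ αI αI' εI εI' ξ : ℂ) * (F f : ℝ → ℂ) ξ +
            (bellFn ρ αI αI' εI εI' (2 * αI - ξ) : ℂ) * (F f : ℝ → ℂ) (2 * αI - ξ) -
            (bellFn ρ αI αI' εI εI' (2 * αI' - ξ) : ℂ) * (F f : ℝ → ℂ) (2 * αI' - ξ)))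
    (hPJ : ∀ f : Lp ℂ 2 (volume : Measure ℝ),
      (F (PJ f) : ℝ → ℂ) =ᵐ[volume] fun ξ =>
        (bellFn ρ αI' αJ' εI' εJ' ξ : ℂ) *
          ((bellFn ρ αI' αJ' εI' εJ' ξ : ℂ) * (F f : ℝ → ℂ) ξ +
            (bellFn ρ αI' αJ' εI' εJ' (2 * αI' - ξ) : ℂ) * (F f : ℝ → ℂ) (2 * αI' - ξ) -
            (bellFn ρ αI' αJ' εI' εJ' (2 * αJ' - ξ) : ℂ) * (F f : ℝ → ℂ) (2 * αJ' - ξ))) :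
    ∀ f : Lp ℂ 2 (volume : Measure ℝ),
      ∀ᵐ ξ ∂(volume : Measure ℝ), ξ ∈ Set.Icc (αI + εI) (αJ' - εJ') →
        (F (PI f) : ℝ → ℂ) ξ + (F (PJ f) : ℝ → ℂ) ξ = (F f : ℝ → ℂ) ξ := by
  intro f
  filter_upwards [hPI f, hPJ f] with ξ hPIξ hPJξ ⟨hξI, hξJ⟩
  rw [hPIξ, hPJξ,
    bellFn_eq_zero_of_le_left_edge hρneg hεI (by linarith : 2 * αI - ξ ≤ αI - εI),
    bellFn_eq_zero_of_right_edge_le hρneg hεJ' (by linarith : αJ' + εJ' ≤ 2 * αJ' - ξ)]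
  have hsq : (bellFn ρ αI αI' εI εI' ξ : ℂ) ^ 2 + (bellFn ρ αI' αJ' εI' εJ' ξ : ℂ) ^ 2 = 1 := by
    exact_mod_cast bellFn_sq_add_bellFn_sq hρpos hρsq hεI hεJ' hξI hξJ
  have hcross : (bellFn ρ αI αI' εI εI' ξ : ℂ) * bellFn ρ αI αI' εI εI' (2 * αI' - ξ) =
      (bellFn ρ αI' αJ' εI' εJ' ξ : ℂ) * bellFn ρ αI' αJ' εI' εJ' (2 * αI' - ξ) := by
    exact_mod_cast bellFn_mul_bellFn_reflect_eq hρneg hρpos hεI hεI' hεJ' hsumI hsumJ ξ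
  push_cast
  linear_combination (F f : ℝ → ℂ) ξ * hsq - (F f : ℝ → ℂ) (2 * αI' - ξ) * hcross

/-- Let `I = [αI, αI')` and `J = [αI', αJ')` be adjacent intervals
with compatible cutoff radii.  With `F` the Fourier transform (a unitary of `L²(ℝ;ℂ)`
characterized by the usual integral formula on integrable functions) and `P_I`, `P_J`
the operators defined on the Fourier side by the bell-function formula, for every
`f ∈ L²(ℝ;ℂ)` one has `(𝓕 𝒫_I f)(ξ) + (𝓕 𝒫_J f)(ξ) = (𝓕 f)(ξ)` for almost every
`ξ ∈ [αI + εI, αJ' − ε'J]`. -/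
theorem stmt14 (ρ : ℝ → ℝ) (hρsmooth : ∀ m : ℕ, ContDiff ℝ m ρ)
    (hρ0 : ∀ ξ, 0 ≤ ρ ξ) (hρ1 : ∀ ξ, ρ ξ ≤ 1)
    (hρneg : ∀ ξ, ξ ≤ -1 → ρ ξ = 0) (hρpos : ∀ ξ, 1 ≤ ξ → ρ ξ = 1)
    (hρsq : ∀ ξ, ρ ξ ^ 2 + ρ (-ξ) ^ 2 = 1)
    (αI αI' αJ' : ℝ) (hI : αI < αI') (hJ : αI' < αJ')
    (εI εI' εJ' : ℝ) (hεI : 0 < εI) (hεI' : 0 < εI') (hεJ' : 0 < εJ')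
    (hsumI : εI + εI' ≤ αI' - αI) (hsumJ : εI' + εJ' ≤ αJ' - αI')
    (F : Lp ℂ 2 (volume : Measure ℝ) ≃ₗᵢ[ℂ] Lp ℂ 2 (volume : Measure ℝ))
    (hF : ∀ f : Lp ℂ 2 (volume : Measure ℝ), Integrable (⇑f) volume →
      (F f : ℝ → ℂ) =ᵐ[volume] fun ξ =>
        ((Real.sqrt (2 * Real.pi))⁻¹ : ℂ) *
          ∫ x : ℝ, f x * Complex.exp (-(Complex.I * x * ξ)))
    (PI PJ : Lp ℂ 2 (volume : Measure ℝ) →L[ℂ] Lp ℂ 2 (volume : Measure ℝ))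
    (hPI : ∀ f : Lp ℂ 2 (volume : Measure ℝ),
      (F (PI f) : ℝ → ℂ) =ᵐ[volume] fun ξ =>
        (bellFn ρ αI αI' εI εI' ξ : ℂ) *
          ((bellFn ρ αI αI' εI εI' ξ : ℂ) * (F f : ℝ → ℂ) ξ +
            (bellFn ρ αI αI' εI εI' (2 * αI - ξ) : ℂ) * (F f : ℝ → ℂ) (2 * αI - ξ) -
            (bellFn ρ αI αI' εI εI' (2 * αI' - ξ) : ℂ) * (F f : ℝ → ℂ) (2 * αI' - ξ)))
    (hPJ : ∀ f : Lp ℂ 2 (volume : Measure ℝ),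
      (F (PJ f) : ℝ → ℂ) =ᵐ[volume] fun ξ =>
        (bellFn ρ αI' αJ' εI' εJ' ξ : ℂ) *
          ((bellFn ρ αI' αJ' εI' εJ' ξ : ℂ) * (F f : ℝ → ℂ) ξ +
            (bellFn ρ αI' αJ' εI' εJ' (2 * αI' - ξ) : ℂ) * (F f : ℝ → ℂ) (2 * αI' - ξ) -
            (bellFn ρ αI' αJ' εI' εJ' (2 * αJ' - ξ) : ℂ) * (F f : ℝ → ℂ) (2 * αJ' - ξ))) :
    ∀ f : Lp ℂ 2 (volume : Measure ℝ),
      ∀ᵐ ξ ∂(volume : Measure ℝ), ξ ∈ Set.Icc (αI + εI) (αJ' - εJ') →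
        (F (PI f) : ℝ → ℂ) ξ + (F (PJ f) : ℝ → ℂ) ξ = (F f : ℝ → ℂ) ξ :=
  stmt14_general ρ hρneg hρpos hρsq αI αI' αJ' εI εI' εJ' hεI hεI' hεJ' hsumI hsumJ F PI PJ hPI hPJ
end
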